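/- (MacWilliams identity for split complete Jacobi polynomials) Let C be an F_q-linear code of length n, χ a non-trivial additive character of F_q, X_1,…,X_ℓ pairwise disjoint sets partitioning {1,…,n}, and T_i ⊆ X_i for each i. Define SCJ_{C,X_1(T_1),…,X_ℓ(T_ℓ)} := Σ_{u∈C} Π_{i=1}^{ℓ} Π_{a∈F_q} x_{X_i,a}^{n_{a,T_i}(u)} · y_{X_i,a}^{n_{a,X_i∖T_i}(u)}. Then SCJ_{C^⊥,X_1(T_1),…,X_ℓ(T_ℓ)}({x_{X_i,a}, y_{X_i,a}}) = (1/|C|) · SCJ_{C,X_1(T_1),…,X_ℓ(T_ℓ)}( { Σ_{b∈F_q} χ(ab) x_{X_i,b}, Σ_{b∈F_q} χ(ab) y_{X_i,b} }_{a∈F_q, 1≤i≤ℓ} ). -/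

import Mathlib

/-!
Since the blocks `X i` partition the coordinates, the split complete Jacobi weight of a word `u`
is a product `∏ j, G j (u j)` of variables depending on the position `j`. For such weights,
expanding `∏ j, ∑ b, χ (u j * b) * G j b` and exchanging the sums reduces the identity to the
orthogonality relation `∑ u ∈ C, χ (u ⬝ᵥ v) = |C| · [v ∈ C^⊥]`: when `v ∉ C^⊥`, the functional
`u ↦ u ⬝ᵥ v` is onto `F`, so `u ↦ χ (u ⬝ᵥ v)` is a nontrivial character of `C`.
-/

open Finset
open scoped Classical

noncomputable section

/-- `n_{a,X}(u) = #{ i ∈ X : u_i = a }`. -/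
def count {F : Type*} {n : ℕ} (u : Fin n → F) (X : Finset (Fin n)) (a : F) : ℕ :=
  (X.filter (fun i => u i = a)).card

/-- The codewords of a linear code `C ⊆ F^n`, as a finset. -/
def codeFinset {F : Type*} [Field F] [Fintype F] {n : ℕ}
    (C : Submodule F (Fin n → F)) : Finset (Fin n → F) :=
  Finset.univ.filter (· ∈ C)

/-- The dual code `C^⊥ = {v : u·v = 0 for all u ∈ C}`, as a finset. -/
def dualFinset {F : Type*} [Field F] [Fintype F] {n : ℕ}
    (C : Submodule F (Fin n → F)) : Finset (Fin n → F) :=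
  Finset.univ.filter (fun v => ∀ u ∈ C, ∑ i, u i * v i = 0)

lemma AddChar.map_sum_eq_prod {A M ι : Type*} [AddCommMonoid A] [CommMonoid M] (ψ : AddChar A M)
    (s : Finset ι) (f : ι → A) : ψ (∑ i ∈ s, f i) = ∏ i ∈ s, ψ (f i) :=
  map_prod ψ.toMonoidHom (fun i => Multiplicative.ofAdd (f i)) s

lemma sum_codeFinset_addChar_dotProduct {F R : Type*} [Field F] [Fintype F] [CommRing R]
    [IsDomain R] {n : ℕ} (C : Submodule F (Fin n → F)) {χ : AddChar F R} (hχ : χ ≠ 1)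
    (v : Fin n → F) :
    ∑ u ∈ codeFinset C, χ (u ⬝ᵥ v) = if v ∈ dualFinset C then (#(codeFinset C) : R) else 0 := by
  split_ifs with hv
  · rw [dualFinset, mem_filter] at hv
    rw [sum_congr rfl fun u hu => by rw [show u ⬝ᵥ v = 0 from hv.2 u (mem_filter.1 hu).2,
      χ.map_zero_eq_one], sum_const, nsmul_one]
  · let φ : C →ₗ[F] F := dotProductEquiv F (Fin n) v ∘ₗ C.subtype
    have hφ : φ ≠ 0 := by
      contrapose! hv
      refine mem_filter.2 ⟨mem_univ _, fun u hu => ?_⟩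
      exact (dotProduct_comm u v).trans (LinearMap.congr_fun hv ⟨u, hu⟩)
    have hψ : χ.compAddMonoidHom φ.toAddMonoidHom ≠ 1 := by
      obtain ⟨t, ht⟩ := AddChar.ne_one_iff.1 hχ
      obtain ⟨u, rfl⟩ := LinearMap.surjective_of_ne_zero hφ t
      exact AddChar.ne_one_iff.2 ⟨u, ht⟩
    rw [sum_subtype (codeFinset C) (p := (· ∈ C)) (fun u => by simp [codeFinset])]
    simpa [φ, dotProduct_comm] using AddChar.sum_eq_zero_of_ne_one hψ

theorem card_mul_sum_dualFinset_prod {F R : Type*} [Field F] [Fintype F] [CommRing R]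
    [IsDomain R] {n : ℕ} (C : Submodule F (Fin n → F)) {χ : AddChar F R} (hχ : χ ≠ 1)
    (G : Fin n → F → R) :
    (#(codeFinset C) : R) * ∑ v ∈ dualFinset C, ∏ j, G j (v j) =
      ∑ u ∈ codeFinset C, ∏ j, ∑ b, χ (u j * b) * G j b := by
  have expand (u : Fin n → F) :
      ∏ j, ∑ b, χ (u j * b) * G j b = ∑ v, χ (u ⬝ᵥ v) * ∏ j, G j (v j) := by
    rw [prod_univ_sum, Fintype.piFinset_univ]
    refine sum_congr rfl fun v _ => ?_
    rw [dotProduct, AddChar.map_sum_eq_prod, prod_mul_distrib]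
  simp_rw [expand]
  rw [sum_comm]
  simp_rw [← sum_mul, sum_codeFinset_addChar_dotProduct C hχ, ite_mul, zero_mul]
  rw [sum_ite_mem, univ_inter, mul_sum]

lemma prod_pow_count {F M : Type*} [Fintype F] [CommMonoid M] {n : ℕ} (v : Fin n → F)
    (S : Finset (Fin n)) (f : F → M) : ∏ a, f a ^ count v S a = ∏ j ∈ S, f (v j) := by
  rw [← prod_fiberwise' S v f]
  simp [count]

lemma prod_pow_count_mul_pow_count_sdiff {F M : Type*} [Fintype F] [CommMonoid M] {n : ℕ}
    (v : Fin n → F) {S T : Finset (Fin n)} (hT : T ⊆ S) (f g : F → M) :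
    ∏ a, f a ^ count v T a * g a ^ count v (S \ T) a =
      ∏ j ∈ S, if j ∈ T then f (v j) else g (v j) := by
  rw [prod_mul_distrib, prod_pow_count, prod_pow_count, prod_ite, filter_mem_eq_inter,
    inter_eq_right.2 hT, sdiff_eq_filter]

lemma exists_index_of_partition {ι α : Type*} [Fintype ι] [Fintype α] [DecidableEq α]
    {X : ι → Finset α} (hdisj : ∀ i j, i ≠ j → Disjoint (X i) (X j))
    (hunion : univ.biUnion X = univ) :
    ∃ p : α → ι, ∀ i j, j ∈ X i ↔ p j = i := by
  have hcover (j : α) : ∃ i, j ∈ X i := by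
    simpa using (hunion.symm ▸ mem_univ j : j ∈ univ.biUnion X)
  choose p hp using hcover
  refine ⟨p, fun i j => ⟨fun hj => ?_, fun hi => hi ▸ hp j⟩⟩
  by_contra hne
  exact disjoint_left.1 (hdisj _ _ hne) (hp j) hj

lemma prod_prod_eq_prod_of_mem_iff {ι α M : Type*} [Fintype ι] [Fintype α] [CommMonoid M]
    {X : ι → Finset α} {p : α → ι} (hp : ∀ i j, j ∈ X i ↔ p j = i) (φ : ι → α → M) :
    ∏ i, ∏ j ∈ X i, φ i j = ∏ j, φ (p j) j := by
  rw [← prod_fiberwise univ p (fun j => φ (p j) j)]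
  refine prod_congr rfl fun i _ => prod_congr (by ext j; simp [hp]) fun j hj => ?_
  rw [(mem_filter.1 hj).2]

lemma prod_prod_pow_count_eq_prod_ite {F M ι : Type*} [Fintype F] [Fintype ι] [CommMonoid M]
    {n : ℕ} {X T : ι → Finset (Fin n)} {p : Fin n → ι} (hp : ∀ i j, j ∈ X i ↔ p j = i)
    (hT : ∀ i, T i ⊆ X i) (f g : ι → F → M) (v : Fin n → F) :
    ∏ i, ∏ a, f i a ^ count v (T i) a * g i a ^ count v (X i \ T i) a =
      ∏ j, if j ∈ T (p j) then f (p j) (v j) else g (p j) (v j) := by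
  simp_rw [prod_pow_count_mul_pow_count_sdiff v (hT _)]
  exact prod_prod_eq_prod_of_mem_iff hp fun i j => if j ∈ T i then f i (v j) else g i (v j)

/-- MacWilliams identity for split complete Jacobi polynomials. -/
theorem scj_macwilliams {F : Type*} [Field F] [Fintype F] {n ℓ : ℕ}
    (C : Submodule F (Fin n → F)) (χ : AddChar F ℂ) (hχ : χ ≠ 1)
    (X T : Fin ℓ → Finset (Fin n))
    (hdisj : ∀ i j, i ≠ j → Disjoint (X i) (X j))
    (hunion : Finset.univ.biUnion X = Finset.univ)
    (hT : ∀ i, T i ⊆ X i)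
    (x y : Fin ℓ → F → ℂ) :
    ∑ v ∈ dualFinset C,
        ∏ i, ∏ a : F, x i a ^ count v (T i) a * y i a ^ count v (X i \ T i) a =
      (1 / (Nat.card C : ℂ)) *
        ∑ u ∈ codeFinset C,
          ∏ i, ∏ a : F,
            (∑ b : F, χ (a * b) * x i b) ^ count u (T i) a *
              (∑ b : F, χ (a * b) * y i b) ^ count u (X i \ T i) a := by
  obtain ⟨p, hp⟩ := exists_index_of_partition hdisj hunion
  have hcard : Nat.card C = #(codeFinset C) := by
    rw [Nat.card_eq_fintype_card, codeFinset, Fintype.card_subtype]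
  have hcard_ne : (#(codeFinset C) : ℂ) ≠ 0 :=
    Nat.cast_ne_zero.2 (card_ne_zero_of_mem (mem_filter.2 ⟨mem_univ _, C.zero_mem⟩))
  let G (j : Fin n) (c : F) : ℂ := if j ∈ T (p j) then x (p j) c else y (p j) c
  have hG (u : Fin n → F) (j : Fin n) :
      (if j ∈ T (p j) then ∑ b, χ (u j * b) * x (p j) b else ∑ b, χ (u j * b) * y (p j) b) =
        ∑ b, χ (u j * b) * G j b := by
    simp only [G]
    split_ifs <;> rfl
  simp_rw [prod_prod_pow_count_eq_prod_ite hp hT, hG, hcard,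
    ← card_mul_sum_dualFinset_prod C hχ G, one_div, inv_mul_cancel_left₀ hcard_ne]
  rfl
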